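/- arXiv:2305.12131 — 3 statements merged into one kernel-verified Lean document; each statement's English description precedes it below -/
import Mathlib

section
/- Let u_1,...,u_T be points in R^n with ||u_s - u_r||_2 <= D for all s, r, and let c : [T] -> [T] be a permutation satisfying |c_t - t| <= d - 1 for all t, where d >= 1. Define P_T = sum_{t=2}^T ||u_t - u_{t-1}||_2. Then sum_{t=1}^T ||u_t - u_{c_t}||_2 <= min(2 d P_T, T D), and hence sum_{t=1}^T ||u_t - u_{c_t}||_2 <= sqrt(2 d T D P_T). -/
/-- if `‖u s - u r‖ ≤ D` for all `s, r`, and `c` is a permutation of `[T]`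
with `|c t - t| ≤ d - 1`, then `∑ ‖u t - u (c t)‖ ≤ min (2 d P_T) (T D) ≤ √(2 d T D P_T)`. -/
theorem stmt2 (T n d : ℕ) (hT : 1 ≤ T) (hd : 1 ≤ d) (D : ℝ) (hD : 0 < D)
    (u : ℕ → EuclideanSpace ℝ (Fin n))
    (hdiam : ∀ s ∈ Finset.Icc 1 T, ∀ r ∈ Finset.Icc 1 T, ‖u s - u r‖ ≤ D)
    (c : ℕ → ℕ) (hc : Set.BijOn c (Finset.Icc 1 T) (Finset.Icc 1 T))
    (hlag : ∀ t ∈ Finset.Icc 1 T, |(c t : ℤ) - (t : ℤ)| ≤ (d : ℤ) - 1) :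
    (∑ t ∈ Finset.Icc 1 T, ‖u t - u (c t)‖ ≤
      min (2 * d * ∑ t ∈ Finset.Icc 2 T, ‖u t - u (t - 1)‖) (T * D)) ∧
    ∑ t ∈ Finset.Icc 1 T, ‖u t - u (c t)‖ ≤
      Real.sqrt (2 * d * T * D * ∑ t ∈ Finset.Icc 2 T, ‖u t - u (t - 1)‖) := by
  set A := Finset.Icc 1 T with hA
  set B := Finset.Icc 2 T with hB
  set f : ℕ → ℝ := fun s => ‖u s - u (s - 1)‖ with hf
  have hf0 : ∀ s, 0 ≤ f s := fun s => norm_nonneg _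
  -- telescoping bound
  have tele : ∀ a b : ℕ, a ≤ b → ‖u b - u a‖ ≤ ∑ s ∈ Finset.Icc (a + 1) b, f s := by
    intro a b hab
    induction b, hab using Nat.le_induction with
    | base => simp
    | succ b hb ih =>
      rw [Finset.sum_Icc_succ_top (by omega)]
      have h1 : ‖u (b + 1) - u a‖ ≤ ‖u (b + 1) - u b‖ + ‖u b - u a‖ :=
        norm_sub_le_norm_sub_add_norm_sub _ _ _
      have h2 : f (b + 1) = ‖u (b + 1) - u b‖ := by simp [hf]
      rw [h2]
      linarith
  have hmem : ∀ t ∈ A, c t ∈ A := by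
    intro t ht
    exact Finset.mem_coe.mp (hc.mapsTo (Finset.mem_coe.mpr ht))
  set S : ℕ → Finset ℕ := fun t => Finset.Icc (min t (c t) + 1) (max t (c t)) with hS
  have hterm : ∀ t ∈ A, ‖u t - u (c t)‖ ≤ ∑ s ∈ S t, f s := by
    intro t ht
    rcases le_total t (c t) with h | h
    · simp only [hS, min_eq_left h, max_eq_right h]
      rw [norm_sub_rev]
      exact tele t (c t) h
    · simp only [hS, min_eq_right h, max_eq_left h]
      exact tele (c t) t h
  have hSB : ∀ t ∈ A, S t ⊆ B := by
    intro t ht s hs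
    have hct := hmem t ht
    simp only [hS, Finset.mem_Icc] at hs
    simp only [hA, hB, Finset.mem_Icc] at ht hct ⊢
    omega
  have hcount : ∀ s ∈ B, ((A.filter fun t => s ∈ S t).card : ℝ) ≤ 2 * d := by
    intro s hsB
    have hsub : (A.filter fun t => s ∈ S t) ⊆ Finset.Icc (s - (d - 1)) (s + d - 2) := by
      intro t ht
      obtain ⟨htA, hts⟩ := Finset.mem_filter.mp ht
      have hl := hlag t htA
      rw [abs_le] at hl
      simp only [hS, Finset.mem_Icc] at hts
      simp only [Finset.mem_Icc]
      omega
    have hcard := Finset.card_le_card hsub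
    rw [Nat.card_Icc] at hcard
    have hs2 : 2 ≤ s := (Finset.mem_Icc.mp hsB).1
    have hfin : (A.filter fun t => s ∈ S t).card ≤ 2 * d := by omega
    calc ((A.filter fun t => s ∈ S t).card : ℝ) ≤ ((2 * d : ℕ) : ℝ) := by exact_mod_cast hfin
    _ = 2 * d := by push_cast; ring
  have key : ∑ t ∈ A, ‖u t - u (c t)‖ ≤ 2 * d * ∑ s ∈ B, f s := by
    calc ∑ t ∈ A, ‖u t - u (c t)‖ ≤ ∑ t ∈ A, ∑ s ∈ S t, f s := Finset.sum_le_sum hterm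
    _ = ∑ t ∈ A, ∑ s ∈ B, if s ∈ S t then f s else 0 := by
        refine Finset.sum_congr rfl fun t ht => ?_
        rw [Finset.sum_ite_mem, Finset.inter_eq_right.mpr (hSB t ht)]
    _ = ∑ s ∈ B, ∑ t ∈ A, if s ∈ S t then f s else 0 := Finset.sum_comm
    _ = ∑ s ∈ B, ((A.filter fun t => s ∈ S t).card : ℝ) * f s := by
        refine Finset.sum_congr rfl fun s _ => ?_
        rw [Finset.sum_ite, Finset.sum_const, Finset.sum_const_zero, add_zero, nsmul_eq_mul]
    _ ≤ ∑ s ∈ B, 2 * d * f s :=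
        Finset.sum_le_sum fun s hs => mul_le_mul_of_nonneg_right (hcount s hs) (hf0 s)
    _ = 2 * d * ∑ s ∈ B, f s := (Finset.mul_sum _ _ _).symm
  have keyTD : ∑ t ∈ A, ‖u t - u (c t)‖ ≤ T * D := by
    calc ∑ t ∈ A, ‖u t - u (c t)‖ ≤ ∑ t ∈ A, D :=
        Finset.sum_le_sum fun t ht => hdiam t ht (c t) (hmem t ht)
    _ = T * D := by
        rw [Finset.sum_const, hA, Nat.card_Icc, nsmul_eq_mul]
        norm_num
  refine ⟨le_min key keyTD, ?_⟩
  have hP : 0 ≤ ∑ s ∈ B, f s := Finset.sum_nonneg fun s _ => hf0 s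
  have hsum0 : 0 ≤ ∑ t ∈ A, ‖u t - u (c t)‖ := Finset.sum_nonneg fun t _ => norm_nonneg _
  have heq : 2 * (d : ℝ) * T * D * ∑ s ∈ B, f s = (2 * d * ∑ s ∈ B, f s) * (T * D) := by ring
  rw [heq]
  rw [show (∑ t ∈ A, ‖u t - u (c t)‖) = ∑ t ∈ A, ‖u t - u (c t)‖ from rfl]
  have h2dP : 0 ≤ 2 * (d : ℝ) * ∑ s ∈ B, f s := by positivity
  have hTD : (0:ℝ) ≤ T * D := by positivity
  refine (Real.le_sqrt hsum0 (mul_nonneg h2dP hTD)).mpr ?_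
  calc (∑ t ∈ A, ‖u t - u (c t)‖) ^ 2 = (∑ t ∈ A, ‖u t - u (c t)‖) * (∑ t ∈ A, ‖u t - u (c t)‖) := sq _
  _ ≤ (2 * d * ∑ s ∈ B, f s) * (T * D) := mul_le_mul key keyTD hsum0 h2dP
end

section
/- Let K be a convex compact subset of R^n containing 0 with diameter at most D (||x - y||_2 <= D for all x, y in K). Let g_1,...,g_T in R^n with ||g_t||_2 <= G, let eta > 0, and define y_1 = 0 and y_{t+1} = Proj_K(y_t - eta g_t), where Proj_K is the Euclidean projection onto K. Then for any u_1,...,u_T in K, sum_{t=1}^T <g_t, y_t - u_t> <= (D^2 + D P_T)/eta + eta T G^2 / 2, where P_T = sum_{t=2}^T ||u_t - u_{t-1}||_2. -/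
open RealInnerProductSpace

/-- Variational inequality for the metric projection onto a convex set. -/
lemma stmt4_var_ineq {E : Type*} [NormedAddCommGroup E] [InnerProductSpace ℝ E]
    {K : Set E} (hK : Convex ℝ K) {z p : E} (hp : p ∈ K)
    (hmin : ∀ x ∈ K, ‖p - z‖ ≤ ‖x - z‖) {x : E} (hx : x ∈ K) :
    ⟪z - p, x - p⟫ ≤ 0 := by
  by_contra h
  push_neg at h
  set c : ℝ := ⟪z - p, x - p⟫ with hc
  have hxp : x - p ≠ 0 := by
    intro h0
    rw [hc, h0, inner_zero_right] at h
    exact lt_irrefl 0 h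
  have hnorm : 0 < ‖x - p‖ ^ 2 := pow_pos (norm_pos_iff.mpr hxp) 2
  set s : ℝ := min 1 (c / ‖x - p‖ ^ 2) with hs
  have hs0 : 0 < s := lt_min one_pos (div_pos h hnorm)
  have hs1 : s ≤ 1 := min_le_left _ _
  have hq : p + s • (x - p) ∈ K := by
    have hcomb := hK hp hx (by linarith : (0:ℝ) ≤ 1 - s) hs0.le (by ring)
    have : (1 - s) • p + s • x = p + s • (x - p) := by module
    rwa [this] at hcomb
  have h1 : ‖p - z‖ ≤ ‖p + s • (x - p) - z‖ := hmin _ hq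
  have h1' : ‖p - z‖ ^ 2 ≤ ‖p + s • (x - p) - z‖ ^ 2 :=
    pow_le_pow_left₀ (norm_nonneg _) h1 2
  have hrw : p + s • (x - p) - z = (p - z) + s • (x - p) := by abel
  have hexp : ‖p + s • (x - p) - z‖ ^ 2
      = ‖p - z‖ ^ 2 + 2 * (s * (-c)) + s ^ 2 * ‖x - p‖ ^ 2 := by
    rw [hrw, norm_add_sq_real, real_inner_smul_right, norm_smul]
    have hin : ⟪p - z, x - p⟫ = -c := by
      rw [hc, ← inner_neg_left, neg_sub]
    rw [hin]
    simp [abs_of_pos hs0]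
    ring
  have hkey : 2 * c ≤ s * ‖x - p‖ ^ 2 := by nlinarith
  have hsle : s * ‖x - p‖ ^ 2 ≤ c := by
    have : s ≤ c / ‖x - p‖ ^ 2 := min_le_right _ _
    calc s * ‖x - p‖ ^ 2 ≤ (c / ‖x - p‖ ^ 2) * ‖x - p‖ ^ 2 := by
          exact mul_le_mul_of_nonneg_right this hnorm.le
      _ = c := by field_simp
  linarith

/-- Squared-distance contraction for the metric projection onto a convex set. -/
lemma stmt4_proj_sq {E : Type*} [NormedAddCommGroup E] [InnerProductSpace ℝ E]
    {K : Set E} (hK : Convex ℝ K) {z p : E} (hp : p ∈ K)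
    (hmin : ∀ x ∈ K, ‖p - z‖ ≤ ‖x - z‖) {x : E} (hx : x ∈ K) :
    ‖p - x‖ ^ 2 ≤ ‖z - x‖ ^ 2 - ‖z - p‖ ^ 2 := by
  have hvar : ⟪z - p, x - p⟫ ≤ 0 := stmt4_var_ineq hK hp hmin hx
  have hdecomp : ‖z - x‖ ^ 2
      = ‖z - p‖ ^ 2 + 2 * ⟪z - p, p - x⟫ + ‖p - x‖ ^ 2 := by
    have h := norm_add_sq_real (z - p) (p - x)
    rw [sub_add_sub_cancel] at h
    linarith
  have hin : ⟪z - p, p - x⟫ = -⟪z - p, x - p⟫ := by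
    rw [← inner_neg_right, neg_sub]
  linarith [hdecomp, hin ▸ (neg_nonneg.mpr hvar : (0:ℝ) ≤ -⟪z - p, x - p⟫)]

/-- dynamic regret of projected online gradient descent. Here the
projection is characterized by its defining property (membership in `K` and
minimal distance). -/
theorem stmt4 (n T : ℕ) (K : Set (EuclideanSpace ℝ (Fin n)))
    (hKconv : Convex ℝ K) (hKcomp : IsCompact K) (hK0 : (0 : EuclideanSpace ℝ (Fin n)) ∈ K)
    (D G η : ℝ) (hD : ∀ x ∈ K, ∀ y ∈ K, ‖x - y‖ ≤ D) (hη : 0 < η)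
    (g : ℕ → EuclideanSpace ℝ (Fin n)) (hG : ∀ t ∈ Finset.Icc 1 T, ‖g t‖ ≤ G)
    (y : ℕ → EuclideanSpace ℝ (Fin n)) (hy1 : y 1 = 0)
    (hproj : ∀ t ∈ Finset.Icc 1 T, y (t + 1) ∈ K ∧
      ∀ x ∈ K, ‖y (t + 1) - (y t - η • g t)‖ ≤ ‖x - (y t - η • g t)‖)
    (u : ℕ → EuclideanSpace ℝ (Fin n)) (hu : ∀ t ∈ Finset.Icc 1 T, u t ∈ K) :
    ∑ t ∈ Finset.Icc 1 T, inner ℝ (g t) (y t - u t) ≤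
      (D ^ 2 + D * ∑ t ∈ Finset.Icc 2 T, ‖u t - u (t - 1)‖) / η + η * T * G ^ 2 / 2 := by
  have hD0 : 0 ≤ D := by simpa using hD 0 hK0 0 hK0
  rcases Nat.eq_zero_or_pos T with hT | hT
  · subst hT
    simp only [Finset.Icc_eq_empty_of_lt (by norm_num : (1:ℕ) > 0),
      Finset.sum_empty]
    have h1 : ∑ t ∈ Finset.Icc 2 0, ‖u t - u (t - 1)‖ = 0 := by simp
    rw [h1]
    have : (0:ℝ) ≤ (D ^ 2 + D * 0) / η + η * 0 * G ^ 2 / 2 := by positivity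
    simpa using this
  set a : ℕ → ℝ := fun t => ‖y t - u t‖ ^ 2 with ha
  set b : ℕ → ℝ := fun t => ‖y (t + 1) - u t‖ ^ 2 with hb
  -- per-step inequality
  have hstep : ∀ t ∈ Finset.Icc 1 T,
      ⟪g t, y t - u t⟫ ≤ (a t - b t) / (2 * η) + η * G ^ 2 / 2 := by
    intro t ht
    obtain ⟨hyK, hmin⟩ := hproj t ht
    have hb' : b t ≤ ‖(y t - η • g t) - u t‖ ^ 2 := by
      have h := stmt4_proj_sq hKconv hyK hmin (hu t ht)
      have h2 : (0:ℝ) ≤ ‖(y t - η • g t) - y (t + 1)‖ ^ 2 := sq_nonneg _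
      simp only [hb]
      nlinarith
    have hexp : ‖(y t - η • g t) - u t‖ ^ 2
        = a t - 2 * η * ⟪g t, y t - u t⟫ + η ^ 2 * ‖g t‖ ^ 2 := by
      have h1 : (y t - η • g t) - u t = (y t - u t) + (-η) • g t := by module
      rw [h1, norm_add_sq_real, real_inner_smul_right, norm_smul,
        real_inner_comm]
      simp [ha, abs_of_pos hη]
      ring
    have hg : ‖g t‖ ^ 2 ≤ G ^ 2 := by
      have := hG t ht
      nlinarith [norm_nonneg (g t)]
    have hkey : 2 * η * ⟪g t, y t - u t⟫ ≤ a t - b t + η ^ 2 * G ^ 2 := by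
      nlinarith [sq_nonneg η]
    have h2η : (0:ℝ) < 2 * η := by linarith
    calc ⟪g t, y t - u t⟫ = (2 * η * ⟪g t, y t - u t⟫) / (2 * η) := by
          field_simp
      _ ≤ (a t - b t + η ^ 2 * G ^ 2) / (2 * η) := by gcongr
      _ = (a t - b t) / (2 * η) + η * G ^ 2 / 2 := by
          field_simp
  -- telescoping pieces
  have hb_nonneg : ∀ t, 0 ≤ b t := fun t => sq_nonneg _
  have ha1 : a 1 ≤ D ^ 2 := by
    have h1 : (1:ℕ) ∈ Finset.Icc 1 T := by simp; omega
    have := hD 0 hK0 (u 1) (hu 1 h1)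
    have hnn : (0:ℝ) ≤ ‖y 1 - u 1‖ := norm_nonneg _
    have heq : ‖y 1 - u 1‖ = ‖(0 : EuclideanSpace ℝ (Fin n)) - u 1‖ := by rw [hy1]
    simp only [ha]
    nlinarith [heq ▸ this]
  have hab : ∀ m, 1 ≤ m → m + 1 ≤ T →
      a (m + 1) - b m ≤ 2 * D * ‖u (m + 1) - u m‖ := by
    intro m hm hmT
    have hmem : m ∈ Finset.Icc 1 T := by simp [hm]; omega
    have hmem' : m + 1 ∈ Finset.Icc 1 T := by simp; omega
    have hyK : y (m + 1) ∈ K := (hproj m hmem).1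
    have hN1 : ‖y (m + 1) - u (m + 1)‖ ≤ D := hD _ hyK _ (hu _ hmem')
    have hN2 : ‖y (m + 1) - u m‖ ≤ D := hD _ hyK _ (hu _ hmem)
    have htri : ‖y (m + 1) - u (m + 1)‖ - ‖y (m + 1) - u m‖
        ≤ ‖u (m + 1) - u m‖ := by
      have := norm_sub_norm_le (y (m + 1) - u (m + 1)) (y (m + 1) - u m)
      have heq : (y (m + 1) - u (m + 1)) - (y (m + 1) - u m) = u m - u (m + 1) := by
        abel
      rw [heq] at this
      have hrev : ‖u m - u (m + 1)‖ = ‖u (m + 1) - u m‖ := norm_sub_rev _ _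
      linarith
    have hn1 : (0:ℝ) ≤ ‖y (m + 1) - u (m + 1)‖ := norm_nonneg _
    have hn2 : (0:ℝ) ≤ ‖y (m + 1) - u m‖ := norm_nonneg _
    have hnu : (0:ℝ) ≤ ‖u (m + 1) - u m‖ := norm_nonneg _
    simp only [ha, hb]
    nlinarith
  -- telescoping by induction
  have Q : ∀ m, 1 ≤ m → m ≤ T →
      ∑ t ∈ Finset.Icc 1 m, (a t - b t)
        ≤ a 1 - b m + 2 * D * ∑ t ∈ Finset.Icc 2 m, ‖u t - u (t - 1)‖ := by
    intro m hm
    induction m, hm using Nat.le_induction with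
    | base =>
      intro _
      simp
    | succ m hm ih =>
      intro hmT
      have ihm := ih (by omega)
      rw [Finset.sum_Icc_succ_top (by omega : 1 ≤ m + 1),
        Finset.sum_Icc_succ_top (by omega : 2 ≤ m + 1)]
      have habm := hab m hm hmT
      have hsimp : ‖u (m + 1) - u (m + 1 - 1)‖ = ‖u (m + 1) - u m‖ := by
        simp
      rw [hsimp]
      linarith
  have hsum : ∑ t ∈ Finset.Icc 1 T, (a t - b t)
      ≤ D ^ 2 + 2 * D * ∑ t ∈ Finset.Icc 2 T, ‖u t - u (t - 1)‖ := by
    have := Q T hT le_rfl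
    linarith [hb_nonneg T]
  have hP : (0:ℝ) ≤ ∑ t ∈ Finset.Icc 2 T, ‖u t - u (t - 1)‖ :=
    Finset.sum_nonneg fun t _ => norm_nonneg _
  set P : ℝ := ∑ t ∈ Finset.Icc 2 T, ‖u t - u (t - 1)‖ with hPdef
  have hcard : ((Finset.Icc 1 T).card : ℝ) = (T : ℝ) := by
    rw [Nat.card_Icc]; simp
  calc ∑ t ∈ Finset.Icc 1 T, ⟪g t, y t - u t⟫
      ≤ ∑ t ∈ Finset.Icc 1 T, ((a t - b t) / (2 * η) + η * G ^ 2 / 2) :=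
        Finset.sum_le_sum hstep
    _ = (∑ t ∈ Finset.Icc 1 T, (a t - b t)) / (2 * η)
        + (T : ℝ) * (η * G ^ 2 / 2) := by
        rw [Finset.sum_add_distrib, Finset.sum_const, ← Finset.sum_div,
          nsmul_eq_mul, hcard]
    _ ≤ (D ^ 2 + 2 * D * P) / (2 * η) + (T : ℝ) * (η * G ^ 2 / 2) := by
        gcongr
    _ ≤ (D ^ 2 + D * P) / η + η * T * G ^ 2 / 2 := by
        have h1 : (D ^ 2 + 2 * D * P) / (2 * η) ≤ (D ^ 2 + D * P) / η := by
          rw [div_le_div_iff₀ (by linarith) hη]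
          nlinarith [mul_nonneg hη.le (sq_nonneg D)]
        have h2 : (T : ℝ) * (η * G ^ 2 / 2) = η * T * G ^ 2 / 2 := by ring
        linarith [h2 ▸ le_refl ((T : ℝ) * (η * G ^ 2 / 2))]
end

section
/- For real numbers D > 0, G > 0, beta > 0, and P in [0, T D], define eta* = sqrt(D(D+P)/(beta G^2)) and eta_i = 2^{i-1} D / (G sqrt(beta)) for i = 1,...,N with N = ceil( (1/2) log2(T+1) ) + 1. Then there exists k in {1,...,N} with eta_k <= eta* <= 2 eta_k, and one may take k = floor( log2( sqrt((P+D)/D) ) ) + 1. -/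
/-- the geometric grid `η i = 2^(i-1) D / (G √β)`, `i = 1, …, N`,
`N = ⌈(1/2) log₂ (T+1)⌉ + 1`, contains a learning rate `η k` with
`η k ≤ η* ≤ 2 η k`, where `η* = √(D (D + P) / (β G²))`; one may take
`k = ⌊log₂ √((P + D)/D)⌋ + 1`. -/
theorem stmt10 (T : ℕ) (hT : 1 ≤ T) (D G β P : ℝ)
    (hD : 0 < D) (hG : 0 < G) (hβ : 0 < β) (hP0 : 0 ≤ P) (hPT : P ≤ T * D) :
    ∃ k : ℤ, k = ⌊Real.logb 2 (Real.sqrt ((P + D) / D))⌋ + 1 ∧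
      1 ≤ k ∧ k ≤ ⌈(1 / 2 : ℝ) * Real.logb 2 (T + 1)⌉ + 1 ∧
      (2 : ℝ) ^ (k - 1) * D / (G * Real.sqrt β) ≤ Real.sqrt (D * (D + P) / (β * G ^ 2)) ∧
      Real.sqrt (D * (D + P) / (β * G ^ 2)) ≤ 2 * ((2 : ℝ) ^ (k - 1) * D / (G * Real.sqrt β)) := by
  set s : ℝ := Real.sqrt ((P + D) / D) with hs
  set L : ℝ := Real.logb 2 s with hL
  refine ⟨⌊L⌋ + 1, rfl, ?_, ?_, ?_, ?_⟩
  · -- x := (P+D)/D ≥ 1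
    have hx1 : (1 : ℝ) ≤ (P + D) / D := by
      rw [le_div_iff₀ hD]; linarith
    have hs1 : (1 : ℝ) ≤ s := by
      rw [hs, show (1:ℝ) = Real.sqrt 1 by simp]
      exact Real.sqrt_le_sqrt hx1
    have : (0 : ℝ) ≤ L := Real.logb_nonneg one_lt_two hs1
    have := Int.floor_nonneg.mpr this
    omega
  · have hx1 : (1 : ℝ) ≤ (P + D) / D := by
      rw [le_div_iff₀ hD]; linarith
    have hxT : (P + D) / D ≤ T + 1 := by
      rw [div_le_iff₀ hD]; nlinarith
    have hLle : L ≤ (1 / 2 : ℝ) * Real.logb 2 (T + 1) := by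
      have : L = (1/2 : ℝ) * Real.logb 2 ((P + D) / D) := by
        rw [hL, hs, Real.logb, Real.log_sqrt (by linarith), Real.logb]
        ring
      rw [this]
      have := Real.logb_le_logb_of_le (b := 2) one_lt_two (by linarith) (by linarith : (P + D) / D ≤ (T:ℝ) + 1)
      linarith
    have h1 : (⌊L⌋ : ℤ) ≤ ⌈(1 / 2 : ℝ) * Real.logb 2 (T + 1)⌉ := by
      exact_mod_cast Int.le_ceil_iff.mpr (by
        have := Int.floor_le L
        push_cast
        linarith)
    omega
  all_goals
  · have hx1 : (1 : ℝ) ≤ (P + D) / D := by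
      rw [le_div_iff₀ hD]; linarith
    have hspos : (0 : ℝ) < s := by
      rw [hs]; positivity
    have hfac : Real.sqrt (D * (D + P) / (β * G ^ 2)) = s * (D / (G * Real.sqrt β)) := by
      have : D * (D + P) / (β * G ^ 2) = ((P + D) / D) * (D / (G * Real.sqrt β)) ^ 2 := by
        have hb : (G * Real.sqrt β) ^ 2 = G ^ 2 * β := by
          rw [mul_pow, Real.sq_sqrt hβ.le]
        rw [div_pow, hb]
        field_simp
        ring
      rw [this, Real.sqrt_mul (by positivity), Real.sqrt_sq (by positivity), hs]
    have hrpow : (2 : ℝ) ^ L = s := Real.rpow_logb two_pos (by norm_num) hspos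
    have hposc : (0 : ℝ) < D / (G * Real.sqrt β) := by positivity
    rw [hfac]
    · first
      | · -- lower bound
          have h1 : (2 : ℝ) ^ ((⌊L⌋ + 1 - 1 : ℤ)) ≤ s := by
            rw [← hrpow, show (⌊L⌋ + 1 - 1 : ℤ) = ⌊L⌋ by ring,
              ← Real.rpow_intCast 2 ⌊L⌋]
            exact Real.rpow_le_rpow_of_exponent_le one_le_two (Int.floor_le L)
          calc (2 : ℝ) ^ (⌊L⌋ + 1 - 1) * D / (G * Real.sqrt β)
              = (2 : ℝ) ^ (⌊L⌋ + 1 - 1) * (D / (G * Real.sqrt β)) := by ring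
            _ ≤ s * (D / (G * Real.sqrt β)) := by
                exact mul_le_mul_of_nonneg_right h1 hposc.le
      | · -- upper bound
          have h2 : s ≤ (2 : ℝ) ^ ((⌊L⌋ + 1 : ℤ)) := by
            rw [← hrpow, ← Real.rpow_intCast 2 (⌊L⌋ + 1)]
            refine Real.rpow_le_rpow_of_exponent_le one_le_two ?_
            push_cast
            exact (Int.lt_floor_add_one L).le
          calc s * (D / (G * Real.sqrt β))
              ≤ (2 : ℝ) ^ ((⌊L⌋ + 1 : ℤ)) * (D / (G * Real.sqrt β)) := by
                exact mul_le_mul_of_nonneg_right h2 hposc.le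
            _ = 2 * ((2 : ℝ) ^ (⌊L⌋ + 1 - 1) * D / (G * Real.sqrt β)) := by
                rw [show (⌊L⌋ + 1 : ℤ) = (⌊L⌋ + 1 - 1) + 1 by ring, zpow_add_one₀ (by norm_num)]
                ring
end
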